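/- The subspaces H₁ := L²(0,1) ⊕ L²(𝒲) and H₂ := {0} ⊕ L²((0,1)∖𝒲) reduce A_{αβ}: if (y,z) belongs to the domain of A_{αβ}, then (y, χ_𝒲·z) belongs to the domain of A_{αβ} and A_{αβ}(y, χ_𝒲·z) ∈ H₁, and (0, χ_{(0,1)∖𝒲}·z) belongs to the domain of A_{αβ} and A_{αβ}(0, χ_{(0,1)∖𝒲}·z) ∈ H₂; here χ_E denotes the indicator function of the set E. -/

import Mathlib

open MeasureTheory Filter

/-- Lebesgue measure restricted to `(0,1)`. -/
noncomputable def m01 : Measure ℝ := volume.restrict (Set.Ioo 0 1)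

/-- The graph of the Hain-Lüst operator `A_{αβ}`:
`(Y,Z)` lies in the domain (i.e. `Y` has an `H²(0,1)` representative `y` — `y` is `C¹` on
`[0,1]` with absolutely continuous derivative whose a.e. derivative `y''` is in `L²` —
satisfying the boundary conditions) and `(F,G) = A_{αβ}(Y,Z)`. -/
def HLGraph (q u w : ℝ → ℂ) (α β : ℝ)
    (Y Z F G : Lp ℂ 2 m01) : Prop :=
  ∃ y y' y'' : ℝ → ℂ,
    -- `y` is differentiable on `[0,1]` with derivative `y'`
    (∀ t ∈ Set.Icc (0:ℝ) 1, HasDerivWithinAt y (y' t) (Set.Icc (0:ℝ) 1) t) ∧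
    -- `y` is continuously differentiable
    ContinuousOn y' (Set.Icc (0:ℝ) 1) ∧
    -- `y'` is absolutely continuous with a.e. derivative `y''`
    (∀ t ∈ Set.Icc (0:ℝ) 1, y' t = y' 0 + ∫ s in (0:ℝ)..t, y'' s) ∧
    -- `y'' ∈ L²(0,1)`
    MemLp y'' 2 m01 ∧
    -- boundary conditions `y'(1) + cot β · y(1) = 0` and `y'(0) + cot α · y(0) = 0`
    (y' 1 + (((Real.cos β / Real.sin β : ℝ) : ℂ)) * y 1 = 0) ∧
    (y' 0 + (((Real.cos α / Real.sin α : ℝ) : ℂ)) * y 0 = 0) ∧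
    (Y : ℝ → ℂ) =ᵐ[m01] y ∧
    -- the action `A_{αβ}(y,z) = (−y'' + q y + w z, w y + u z)`
    (F : ℝ → ℂ) =ᵐ[m01] (fun x => -(y'' x) + q x * y x + w x * Z x) ∧
    (G : ℝ → ℂ) =ᵐ[m01] (fun x => w x * y x + u x * Z x)

/-! Since `w · χ_𝒲 = w`, replacing `z` by `χ_𝒲 z` leaves the first component `−y'' + q y + w z`
unchanged, while the second one, `w y + u χ_𝒲 z`, vanishes off `𝒲`. On the other hand
`A(0, χ_{(0,1)∖𝒲} z) = (w χ_{(0,1)∖𝒲} z, u χ_{(0,1)∖𝒲} z) = (0, u χ_{(0,1)∖𝒲} z)`. -/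

section HLGraph

variable {q u w : ℝ → ℂ} {α β : ℝ}

theorem memLp_mul_add_mul {μ : Measure ℝ} {y z : ℝ → ℂ} (hw : MemLp w ⊤ μ) (hu : MemLp u ⊤ μ)
    (hy : MemLp y 2 μ) (hz : MemLp z 2 μ) :
    MemLp (fun x => w x * y x + u x * z x) 2 μ :=
  (hy.smul hw).add (hz.smul hu)

theorem HLGraph.exists_of_mul_ae_eq (hu : MemLp u ⊤ m01) (hw : MemLp w ⊤ m01)
    {Y Z F G : Lp ℂ 2 m01} (h : HLGraph q u w α β Y Z F G) {Z' : Lp ℂ 2 m01}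
    (hZ' : (fun x => w x * Z' x) =ᵐ[m01] fun x => w x * Z x) :
    ∃ G' : Lp ℂ 2 m01, HLGraph q u w α β Y Z' F G' ∧
      (G' : ℝ → ℂ) =ᵐ[m01] fun x => w x * Y x + u x * Z' x := by
  obtain ⟨y, y', y'', hder, hcont, hac, hy'', hbβ, hbα, hY, hF, -⟩ := h
  have hG' := memLp_mul_add_mul hw hu (Lp.memLp Y) (Lp.memLp Z')
  refine ⟨hG'.toLp _, ⟨y, y', y'', hder, hcont, hac, hy'', hbβ, hbα, hY, ?_, ?_⟩,
    hG'.coeFn_toLp⟩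
  · filter_upwards [hF, hZ'] with x hFx hZx
    rw [hFx, hZx]
  · filter_upwards [hG'.coeFn_toLp, hY] with x hGx hYx
    rw [hGx, hYx]

theorem hlGraph_zero_left (hu : MemLp u ⊤ m01) (hw : MemLp w ⊤ m01) (Z : Lp ℂ 2 m01) :
    ∃ F G : Lp ℂ 2 m01, HLGraph q u w α β 0 Z F G ∧
      (F : ℝ → ℂ) =ᵐ[m01] (fun x => w x * Z x) ∧
      (G : ℝ → ℂ) =ᵐ[m01] (fun x => u x * Z x) := by
  have hF : MemLp (fun x => w x * Z x) 2 m01 := (Lp.memLp Z).smul hw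
  have hG : MemLp (fun x => u x * Z x) 2 m01 := (Lp.memLp Z).smul hu
  refine ⟨hF.toLp _, hG.toLp _,
    ⟨0, 0, 0, fun t _ => hasDerivWithinAt_const t _ 0, continuousOn_const, by simp, MemLp.zero,
      by simp, by simp, Lp.coeFn_zero ℂ 2 m01, ?_, ?_⟩, hF.coeFn_toLp, hG.coeFn_toLp⟩
  · filter_upwards [hF.coeFn_toLp] with x hx
    simp [hx]
  · filter_upwards [hG.coeFn_toLp] with x hx
    simp [hx]

end HLGraph

theorem stmt10_general (q u w : ℝ → ℂ)
    (hu : MemLp u ⊤ m01) (hw : MemLp w ⊤ m01)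
    (α β : ℝ) :
    ∀ Y Z F G : Lp ℂ 2 m01, HLGraph q u w α β Y Z F G →
      -- `(Y, χ_𝒲 · Z)` lies in the domain of `A_{αβ}` and its image lies in
      -- `H₁ = L²(0,1) ⊕ L²(𝒲)`
      (∀ Z₁ : Lp ℂ 2 m01,
        (Z₁ : ℝ → ℂ) =ᵐ[m01] (fun x => if w x = 0 then 0 else Z x) →
          ∃ F₁ G₁ : Lp ℂ 2 m01, HLGraph q u w α β Y Z₁ F₁ G₁ ∧
            (∀ᵐ x ∂m01, w x = 0 → (G₁ : ℝ → ℂ) x = 0)) ∧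
      -- `(0, χ_{(0,1)∖𝒲} · Z)` lies in the domain of `A_{αβ}` and its image lies in
      -- `H₂ = {0} ⊕ L²((0,1)∖𝒲)`
      (∀ Z₂ : Lp ℂ 2 m01,
        (Z₂ : ℝ → ℂ) =ᵐ[m01] (fun x => if w x = 0 then Z x else 0) →
          ∃ F₂ G₂ : Lp ℂ 2 m01, HLGraph q u w α β 0 Z₂ F₂ G₂ ∧
            ((F₂ : ℝ → ℂ) =ᵐ[m01] 0) ∧
            (∀ᵐ x ∂m01, w x ≠ 0 → (G₂ : ℝ → ℂ) x = 0)) := by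
  intro Y Z F G hA
  refine ⟨fun Z₁ hZ₁ => ?_, fun Z₂ hZ₂ => ?_⟩
  · have hwZ₁ : (fun x => w x * Z₁ x) =ᵐ[m01] fun x => w x * Z x := by
      filter_upwards [hZ₁] with x hx
      by_cases hwx : w x = 0 <;> simp [hx, hwx]
    obtain ⟨G₁, hA₁, hG₁⟩ := hA.exists_of_mul_ae_eq hu hw hwZ₁
    refine ⟨F, G₁, hA₁, ?_⟩
    filter_upwards [hG₁, hZ₁] with x hGx hZx hwx
    simp [hGx, hZx, hwx]
  · obtain ⟨F₂, G₂, hA₂, hF₂, hG₂⟩ := hlGraph_zero_left (q := q) (α := α) (β := β) hu hw Z₂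
    refine ⟨F₂, G₂, hA₂, ?_, ?_⟩
    · filter_upwards [hF₂, hZ₂] with x hFx hZx
      by_cases hwx : w x = 0 <;> simp [hFx, hZx, hwx]
    · filter_upwards [hG₂, hZ₂] with x hGx hZx hwx
      simp [hGx, hZx, hwx]

theorem stmt10 (q u w : ℝ → ℂ)
    (hq : MemLp q ⊤ m01) (hu : MemLp u ⊤ m01) (hw : MemLp w ⊤ m01)
    (α β : ℝ) (hα : Real.sin α ≠ 0) (hβ : Real.sin β ≠ 0) :
    ∀ Y Z F G : Lp ℂ 2 m01, HLGraph q u w α β Y Z F G →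
      -- `(Y, χ_𝒲 · Z)` lies in the domain of `A_{αβ}` and its image lies in
      -- `H₁ = L²(0,1) ⊕ L²(𝒲)`
      (∀ Z₁ : Lp ℂ 2 m01,
        (Z₁ : ℝ → ℂ) =ᵐ[m01] (fun x => if w x = 0 then 0 else Z x) →
          ∃ F₁ G₁ : Lp ℂ 2 m01, HLGraph q u w α β Y Z₁ F₁ G₁ ∧
            (∀ᵐ x ∂m01, w x = 0 → (G₁ : ℝ → ℂ) x = 0)) ∧
      -- `(0, χ_{(0,1)∖𝒲} · Z)` lies in the domain of `A_{αβ}` and its image lies in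
      -- `H₂ = {0} ⊕ L²((0,1)∖𝒲)`
      (∀ Z₂ : Lp ℂ 2 m01,
        (Z₂ : ℝ → ℂ) =ᵐ[m01] (fun x => if w x = 0 then Z x else 0) →
          ∃ F₂ G₂ : Lp ℂ 2 m01, HLGraph q u w α β 0 Z₂ F₂ G₂ ∧
            ((F₂ : ℝ → ℂ) =ᵐ[m01] 0) ∧
            (∀ᵐ x ∂m01, w x ≠ 0 → (G₂ : ℝ → ℂ) x = 0)) :=
  stmt10_general q u w hu hw α β
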